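/- Let A ∈ ℝ^{m×n} have rank n with thin QR factorization A + E = Q̂ R̂ of the perturbed matrix (Q̂ ∈ ℝ^{m×n} with orthonormal columns, R̂ ∈ ℝ^{n×n} upper triangular), ε = ‖E‖/‖A‖. Let x* solve AᵀA x* = Aᵀ b, and suppose x̂ ≠ 0 satisfies R̂ᵀ R̂ x̂ = (A+E)ᵀ b. Then ‖x̂ − x*‖/‖x̂‖ ≤ κ(A)² · ε · ( ‖A x̂ − b‖/(‖A‖·‖x̂‖) + 1 + ε ). -/

import Mathlib

open Matrix

/-- Spectral (operator 2-) norm of a real matrix. -/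
noncomputable def spNorm {m n : ℕ} (M : Matrix (Fin m) (Fin n) ℝ) : ℝ :=
  ‖LinearMap.toContinuousLinearMap (Matrix.toEuclideanLin M)‖

/-- Euclidean 2-norm of a real vector. -/
noncomputable def vNorm {n : ℕ} (x : Fin n → ℝ) : ℝ :=
  ‖(WithLp.equiv 2 (Fin n → ℝ)).symm x‖

/-- Moore–Penrose left inverse of a full column rank matrix. -/
noncomputable def pinv {m n : ℕ} (A : Matrix (Fin m) (Fin n) ℝ) : Matrix (Fin n) (Fin m) ℝ :=
  (Aᵀ * A)⁻¹ * Aᵀ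

/-- Condition number with respect to left inversion. -/
noncomputable def kappa {m n : ℕ} (A : Matrix (Fin m) (Fin n) ℝ) : ℝ :=
  spNorm A * spNorm (pinv A)

/-!
Since `Q̂ᵀQ̂ = 1`, `R̂ᵀR̂ = (A + E)ᵀ(A + E)`: the seminormal equations for `x̂` are the normal
equations of `A + E`, so the perturbed residual `r = (A + E)x̂ - b` satisfies `(A + E)ᵀr = 0`.
Subtracting the normal equations of `A` gives `AᵀA(x̂ - x*) = -(AᵀE x̂ + Eᵀr)`, and as
`(AᵀA)⁻¹ = A⁺A⁺ᵀ` this is `x̂ - x* = -A⁺(E x̂ + A⁺ᵀEᵀr)`. Taking norms with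
`‖r‖ ≤ ‖Ax̂ - b‖ + ‖E‖‖x̂‖` gives the bound, the first-order term `‖A⁺‖‖E‖‖x̂‖` being absorbed
through `1 ≤ κ(A)`, which follows from `A⁺A = 1`.
-/

open scoped Matrix.Norms.L2Operator

section Norms

variable {m n : ℕ}

lemma spNorm_nonneg (M : Matrix (Fin m) (Fin n) ℝ) : 0 ≤ spNorm M := norm_nonneg _

lemma spNorm_transpose (M : Matrix (Fin m) (Fin n) ℝ) : spNorm Mᵀ = spNorm M := by
  rw [← conjTranspose_eq_transpose_of_trivial]
  exact M.l2_opNorm_conjTranspose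

lemma vNorm_pos {x : Fin n → ℝ} (hx : x ≠ 0) : 0 < vNorm x := by
  simpa [vNorm] using hx

lemma vNorm_add_le (x y : Fin n → ℝ) : vNorm (x + y) ≤ vNorm x + vNorm y := by
  simpa only [vNorm, WithLp.equiv_symm_apply, WithLp.toLp_add] using norm_add_le _ _

lemma vNorm_neg (x : Fin n → ℝ) : vNorm (-x) = vNorm x := by
  simpa only [vNorm, WithLp.equiv_symm_apply, WithLp.toLp_neg] using norm_neg _

lemma vNorm_mulVec_le (M : Matrix (Fin m) (Fin n) ℝ) (x : Fin n → ℝ) :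
    vNorm (M *ᵥ x) ≤ spNorm M * vNorm x :=
  M.l2_opNorm_mulVec _

end Norms

lemma Matrix.isUnit_of_rank_eq_card {K ι : Type*} [Field K] [Fintype ι] [DecidableEq ι]
    {M : Matrix ι ι K} (hM : M.rank = Fintype.card ι) : IsUnit M := by
  rw [← mulVec_surjective_iff_isUnit, ← coe_mulVecLin, ← LinearMap.range_eq_top]
  apply Submodule.eq_top_of_finrank_eq
  rw [← rank, hM, Module.finrank_fintype_fun_eq_card]

lemma Matrix.isUnit_transpose_mul_self_of_rank_eq_card {K ι κ : Type*} [Field K] [LinearOrder K]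
    [IsStrictOrderedRing K] [Fintype ι] [Fintype κ] [DecidableEq κ] {A : Matrix ι κ K}
    (hA : A.rank = Fintype.card κ) : IsUnit (Aᵀ * A) :=
  isUnit_of_rank_eq_card (by rw [rank_transpose_mul_self, hA])

lemma Matrix.transpose_mul_mul_self_of_transpose_mul_eq_one {R ι κ ν : Type*} [CommSemiring R]
    [Fintype ι] [Fintype κ] [DecidableEq κ] {Q : Matrix ι κ R} (hQ : Qᵀ * Q = 1)
    (M : Matrix κ ν R) : (Q * M)ᵀ * (Q * M) = Mᵀ * M := by
  rw [transpose_mul, Matrix.mul_assoc, ← Matrix.mul_assoc Qᵀ, hQ, Matrix.one_mul]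

lemma Matrix.transpose_mulVec_sub_eq_zero_of_normal_eq {R ι κ : Type*} [CommRing R]
    [Fintype ι] [Fintype κ] {B : Matrix ι κ R} {b : ι → R} {x : κ → R}
    (hx : (Bᵀ * B) *ᵥ x = Bᵀ *ᵥ b) : Bᵀ *ᵥ (B *ᵥ x - b) = 0 := by
  rw [mulVec_sub, mulVec_mulVec, hx, sub_self]

section PseudoInverse

variable {m n : ℕ} {A : Matrix (Fin m) (Fin n) ℝ}

lemma pinv_mul_self (hA : IsUnit (Aᵀ * A)) : pinv A * A = 1 := by
  rw [pinv, Matrix.mul_assoc, nonsing_inv_mul _ ((isUnit_iff_isUnit_det _).mp hA)]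

lemma transpose_mul_self_mul_pinv (hA : IsUnit (Aᵀ * A)) : (Aᵀ * A) * pinv A = Aᵀ := by
  rw [pinv, ← Matrix.mul_assoc, mul_nonsing_inv _ ((isUnit_iff_isUnit_det _).mp hA),
    Matrix.one_mul]

lemma transpose_mul_pinv_transpose (hA : IsUnit (Aᵀ * A)) : Aᵀ * (pinv A)ᵀ = 1 := by
  rw [← transpose_mul, pinv_mul_self hA, transpose_one]

lemma vNorm_le_kappa_mul (hA : IsUnit (Aᵀ * A)) (x : Fin n → ℝ) :
    vNorm x ≤ kappa A * vNorm x :=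
  calc vNorm x = vNorm (pinv A *ᵥ (A *ᵥ x)) := by
        rw [mulVec_mulVec, pinv_mul_self hA, one_mulVec]
    _ ≤ spNorm (pinv A) * (spNorm A * vNorm x) :=
        (vNorm_mulVec_le _ _).trans (by gcongr; exacts [spNorm_nonneg _, vNorm_mulVec_le _ _])
    _ = kappa A * vNorm x := by rw [kappa]; ring

end PseudoInverse

section Perturbation

variable {m n : ℕ} {A E : Matrix (Fin m) (Fin n) ℝ} {b : Fin m → ℝ} {xs xh : Fin n → ℝ}

lemma sub_eq_neg_pinv_mulVec_of_perturbed_normal_eq (hA : IsUnit (Aᵀ * A))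
    (hxs : (Aᵀ * A) *ᵥ xs = Aᵀ *ᵥ b) (hxh : (A + E)ᵀ *ᵥ ((A + E) *ᵥ xh - b) = 0) :
    xh - xs = -(pinv A *ᵥ (E *ᵥ xh + (pinv A)ᵀ *ᵥ (Eᵀ *ᵥ ((A + E) *ᵥ xh - b)))) := by
  set r := (A + E) *ᵥ xh - b with hr
  have hAr : Aᵀ *ᵥ r = -(Eᵀ *ᵥ r) := by
    rw [transpose_add, add_mulVec] at hxh
    exact eq_neg_of_add_eq_zero_left hxh
  have hpinvT (w : Fin n → ℝ) : Aᵀ *ᵥ ((pinv A)ᵀ *ᵥ w) = w := by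
    rw [mulVec_mulVec, transpose_mul_pinv_transpose hA, one_mulVec]
  have hpinv (v : Fin m → ℝ) : (Aᵀ * A) *ᵥ (pinv A *ᵥ v) = Aᵀ *ᵥ v := by
    rw [mulVec_mulVec, transpose_mul_self_mul_pinv hA]
  apply mulVec_injective_iff_isUnit.mpr hA
  calc (Aᵀ * A) *ᵥ (xh - xs) = Aᵀ *ᵥ (A *ᵥ xh - b) := by
        rw [mulVec_sub, hxs, ← mulVec_mulVec, ← mulVec_sub]
    _ = Aᵀ *ᵥ r - Aᵀ *ᵥ (E *ᵥ xh) := by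
        rw [← mulVec_sub, hr, add_mulVec, add_sub_right_comm, add_sub_cancel_right]
    _ = -(Aᵀ *ᵥ (E *ᵥ xh + (pinv A)ᵀ *ᵥ (Eᵀ *ᵥ r))) := by
        rw [hAr, mulVec_add, hpinvT]; abel
    _ = (Aᵀ * A) *ᵥ -(pinv A *ᵥ (E *ᵥ xh + (pinv A)ᵀ *ᵥ (Eᵀ *ᵥ r))) := by
        rw [mulVec_neg, hpinv]

lemma vNorm_sub_le_of_perturbed_normal_eq (hA : IsUnit (Aᵀ * A))
    (hxs : (Aᵀ * A) *ᵥ xs = Aᵀ *ᵥ b) (hxh : (A + E)ᵀ *ᵥ ((A + E) *ᵥ xh - b) = 0) :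
    vNorm (xh - xs) ≤ spNorm (pinv A) * (spNorm E * vNorm xh +
      spNorm (pinv A) * (spNorm E * (vNorm (A *ᵥ xh - b) + spNorm E * vNorm xh))) := by
  have hp := spNorm_nonneg (pinv A)
  have he := spNorm_nonneg E
  have hr : vNorm ((A + E) *ᵥ xh - b) ≤ vNorm (A *ᵥ xh - b) + spNorm E * vNorm xh := by
    rw [add_mulVec, add_sub_right_comm]
    exact (vNorm_add_le _ _).trans (by gcongr; exact vNorm_mulVec_le E xh)
  rw [sub_eq_neg_pinv_mulVec_of_perturbed_normal_eq hA hxs hxh, vNorm_neg]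
  refine (vNorm_mulVec_le _ _).trans (mul_le_mul_of_nonneg_left ?_ hp)
  refine (vNorm_add_le _ _).trans (add_le_add (vNorm_mulVec_le E xh) ?_)
  refine (vNorm_mulVec_le _ _).trans ?_
  rw [spNorm_transpose]
  gcongr
  exact (vNorm_mulVec_le _ _).trans (by rw [spNorm_transpose]; gcongr)

end Perturbation

theorem stmt_8_general {m n : ℕ} (A E : Matrix (Fin m) (Fin n) ℝ)
    (Q : Matrix (Fin m) (Fin n) ℝ) (R : Matrix (Fin n) (Fin n) ℝ)
    (b : Fin m → ℝ) (xs xh : Fin n → ℝ)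
    (hA : A.rank = n)
    (hQ : Qᵀ * Q = 1) (hQR : A + E = Q * R)
    (ε : ℝ) (hε : ε = spNorm E / spNorm A)
    (hxs : (Aᵀ * A) *ᵥ xs = Aᵀ *ᵥ b)
    (hxh : (Rᵀ * R) *ᵥ xh = (A + E)ᵀ *ᵥ b)
    (hne : xh ≠ 0) :
    vNorm (xh - xs) / vNorm xh ≤
      kappa A ^ 2 * ε * (vNorm (A *ᵥ xh - b) / (spNorm A * vNorm xh) + 1 + ε) := by
  have hS : IsUnit (Aᵀ * A) :=
    isUnit_transpose_mul_self_of_rank_eq_card (by rw [hA, Fintype.card_fin])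
  have hRR : Rᵀ * R = (A + E)ᵀ * (A + E) := by
    rw [hQR, transpose_mul_mul_self_of_transpose_mul_eq_one hQ]
  have herr := vNorm_sub_le_of_perturbed_normal_eq hS hxs
    (transpose_mulVec_sub_eq_zero_of_normal_eq (hRR ▸ hxh))
  have hκ := vNorm_le_kappa_mul hS xh
  have hh := vNorm_pos hne
  rw [kappa] at hκ ⊢
  set a := spNorm A
  set p := spNorm (pinv A)
  set e := spNorm E
  have hp : 0 ≤ p := spNorm_nonneg _
  have he : 0 ≤ e := spNorm_nonneg _
  have ha : 0 < a := by
    have : 1 ≤ a * p := le_of_mul_le_mul_right (by rwa [one_mul]) hh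
    by_contra! ha'
    nlinarith
  rw [hε, div_le_iff₀ hh]
  calc vNorm (xh - xs)
        ≤ p * (e * vNorm xh + p * (e * (vNorm (A *ᵥ xh - b) + e * vNorm xh))) := herr
    _ ≤ p * (e * (a * p * vNorm xh) + p * (e * (vNorm (A *ᵥ xh - b) + e * vNorm xh))) := by
        gcongr
    _ = (a * p) ^ 2 * (e / a) * (vNorm (A *ᵥ xh - b) / (a * vNorm xh) + 1 + e / a) *
          vNorm xh := by
        field_simp
        ring

theorem stmt_8 {m n : ℕ} (A E : Matrix (Fin m) (Fin n) ℝ)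
    (Q : Matrix (Fin m) (Fin n) ℝ) (R : Matrix (Fin n) (Fin n) ℝ)
    (b : Fin m → ℝ) (xs xh : Fin n → ℝ)
    (hA : A.rank = n)
    (hQ : Qᵀ * Q = 1) (hRtri : R.BlockTriangular id) (hQR : A + E = Q * R)
    (ε : ℝ) (hε : ε = spNorm E / spNorm A)
    (hxs : (Aᵀ * A) *ᵥ xs = Aᵀ *ᵥ b)
    (hxh : (Rᵀ * R) *ᵥ xh = (A + E)ᵀ *ᵥ b)
    (hne : xh ≠ 0) :
    vNorm (xh - xs) / vNorm xh ≤
      kappa A ^ 2 * ε * (vNorm (A *ᵥ xh - b) / (spNorm A * vNorm xh) + 1 + ε) :=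
  stmt_8_general A E Q R b xs xh hA hQ hQR ε hε hxs hxh hne
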